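/- arXiv:2402.02571 — 9 statements merged into one kernel-verified Lean document; each statement's English description precedes it below -/
import Mathlib

section
/- Let G be a Simple Stochastic Game and let S be a nonempty set of nodes of G such that: every max node in S has at least one out-arc ending in S; every min node in S has at least one out-arc ending in S; every average node in S has all of its out-arcs ending in S; and S contains no terminal node. Then S contains a bad subgraph of G, i.e. there is a nonempty subset S' of S that satisfies these same four conditions (with S replaced by S') and in addition is strongly connected. -/
/-- The four kinds of nodes in a (simple stochastic) game graph. -/
inductive NodeLabel : Type
  | max
  | min
  | avg
  | term
  deriving DecidableEq

/-- `BadSubgraph label A S`: `S` is a *bad subgraph* of the directed graph with arc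
relation `A` and node labeling `label`, i.e. `S` is nonempty, every max node in `S` has
an out-arc ending in `S`, every min node in `S` has an out-arc ending in `S`, every
average node in `S` has all of its out-arcs ending in `S`, `S` contains no terminal
node, and `S` is strongly connected (via directed paths all of whose nodes lie in `S`). -/
def BadSubgraph {V : Type} (label : V → NodeLabel) (A : V → V → Prop) (S : Set V) : Prop :=
  S.Nonempty ∧
  (∀ v ∈ S, label v = NodeLabel.max → ∃ w ∈ S, A v w) ∧
  (∀ v ∈ S, label v = NodeLabel.min → ∃ w ∈ S, A v w) ∧
  (∀ v ∈ S, label v = NodeLabel.avg → ∀ w, A v w → w ∈ S) ∧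
  (∀ v ∈ S, label v ≠ NodeLabel.term) ∧
  (∀ u ∈ S, ∀ v ∈ S, Relation.ReflTransGen (fun a b => a ∈ S ∧ b ∈ S ∧ A a b) u v)

/-- A Simple Stochastic Game on the (finite) node type `V`: every node is labeled
max, min, average or terminal; there are exactly two terminal nodes `t0` (terminal-0)
and `t1` (terminal-1), which have no out-arcs; every non-terminal node `v` has exactly
two out-arcs, ending at `(G.succ v).1` and `(G.succ v).2` (parallel arcs and self-loops
are allowed: the two successors may coincide, and may equal `v`). -/
structure SSG (V : Type) where
  label : V → NodeLabel
  t0 : V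
  t1 : V
  t0_ne_t1 : t0 ≠ t1
  term_iff : ∀ v, label v = NodeLabel.term ↔ v = t0 ∨ v = t1
  succ : V → V × V

/-- The arc relation of an SSG: there is an arc from `u` to `v` iff `u` is non-terminal
and one of the two out-arcs of `u` ends at `v`. -/
def SSG.Arc {V : Type} (G : SSG V) (u v : V) : Prop :=
  G.label u ≠ NodeLabel.term ∧ ((G.succ u).1 = v ∨ (G.succ u).2 = v)

/-- A strategy pair, encoded as a choice function `c` that, at every max node and every
min node, selects one of the two out-arcs of that node. -/
def SSG.IsStrategyPair {V : Type} (G : SSG V) (c : V → V) : Prop :=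
  ∀ v, (G.label v = NodeLabel.max ∨ G.label v = NodeLabel.min) →
    c v = (G.succ v).1 ∨ c v = (G.succ v).2

/-- The arc relation of the strategy subgraph `G_{σ,τ}` induced by the choice function
`c`: max and min nodes keep only their selected out-arc, average nodes keep both
out-arcs, terminal nodes have no out-arcs. -/
def SSG.StratArc {V : Type} (G : SSG V) (c : V → V) (u v : V) : Prop :=
  (G.label u = NodeLabel.avg ∧ ((G.succ u).1 = v ∨ (G.succ u).2 = v)) ∨
  ((G.label u = NodeLabel.max ∨ G.label u = NodeLabel.min) ∧ c u = v)

/-- A Stopping Game: for every strategy pair and every node `u`, there is a directed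
path from `u` to a terminal node in the strategy subgraph. -/
def SSG.Stopping {V : Type} (G : SSG V) : Prop :=
  ∀ c : V → V, G.IsStrategyPair c → ∀ u, ∃ t, G.label t = NodeLabel.term ∧
    Relation.ReflTransGen (G.StratArc c) u t

/-- A stable assignment for an SSG: values lie in `[0,1]`, the terminals get values `0`
and `1`, and every max, min and average node is satisfied. -/
def SSG.Stable {V : Type} (G : SSG V) (v : V → ℝ) : Prop :=
  (∀ i, v i ∈ Set.Icc (0 : ℝ) 1) ∧ v G.t0 = 0 ∧ v G.t1 = 1 ∧
  (∀ i, G.label i = NodeLabel.max → v i = max (v (G.succ i).1) (v (G.succ i).2)) ∧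
  (∀ i, G.label i = NodeLabel.min → v i = min (v (G.succ i).1) (v (G.succ i).2)) ∧
  (∀ i, G.label i = NodeLabel.avg → v i = (v (G.succ i).1 + v (G.succ i).2) / 2)

/-- If a nonempty set `S` of nodes of an SSG contains no terminal node,
every max node in `S` has an out-arc ending in `S`, every min node in `S` has an
out-arc ending in `S`, and every average node in `S` has all of its out-arcs ending in
`S`, then `S` contains a bad subgraph. -/
theorem stmt0 {V : Type} [Fintype V] (G : SSG V) (S : Set V)
    (hne : S.Nonempty)
    (hmax : ∀ v ∈ S, G.label v = NodeLabel.max → ∃ w ∈ S, G.Arc v w)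
    (hmin : ∀ v ∈ S, G.label v = NodeLabel.min → ∃ w ∈ S, G.Arc v w)
    (havg : ∀ v ∈ S, G.label v = NodeLabel.avg → ∀ w, G.Arc v w → w ∈ S)
    (hterm : ∀ v ∈ S, G.label v ≠ NodeLabel.term) :
    ∃ S' ⊆ S, BadSubgraph G.label G.Arc S' := by
  classical
  have hc : ∀ v : V, ∃ w, v ∈ S → (G.label v = NodeLabel.max ∨ G.label v = NodeLabel.min) →
      w ∈ S ∧ G.Arc v w := by
    intro v
    by_cases hv : v ∈ S ∧ (G.label v = NodeLabel.max ∨ G.label v = NodeLabel.min)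
    · rcases hv with ⟨hvS, hl⟩
      rcases hl with h | h
      · obtain ⟨w, hwS, hw⟩ := hmax v hvS h
        exact ⟨w, fun _ _ => ⟨hwS, hw⟩⟩
      · obtain ⟨w, hwS, hw⟩ := hmin v hvS h
        exact ⟨w, fun _ _ => ⟨hwS, hw⟩⟩
    · exact ⟨v, fun h1 h2 => absurd ⟨h1, h2⟩ hv⟩
  set c : V → V := fun v => (hc v).choose with hcdef
  have hcspec : ∀ v ∈ S, (G.label v = NodeLabel.max ∨ G.label v = NodeLabel.min) →
      c v ∈ S ∧ G.Arc v (c v) := fun v h1 h2 => (hc v).choose_spec h1 h2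
  set R : V → V → Prop := fun a b => a ∈ S ∧ b ∈ S ∧ G.Arc a b ∧
      (G.label a = NodeLabel.avg ∨ c a = b) with hRdef
  have hsucc : ∀ a ∈ S, ∃ b, R a b := by
    intro a ha
    have hnt := hterm a ha
    cases hl : G.label a with
    | max =>
        obtain ⟨h1, h2⟩ := hcspec a ha (Or.inl hl)
        exact ⟨c a, ha, h1, h2, Or.inr rfl⟩
    | min =>
        obtain ⟨h1, h2⟩ := hcspec a ha (Or.inr hl)
        exact ⟨c a, ha, h1, h2, Or.inr rfl⟩
    | avg =>
        have harc : G.Arc a (G.succ a).1 := ⟨by simp [hl], Or.inl rfl⟩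
        exact ⟨(G.succ a).1, ha, havg a ha hl _ harc, harc, Or.inl hl⟩
    | term => exact absurd hl hnt
  set C : Set (Set V) := {T | T ⊆ S ∧ T.Nonempty ∧ ∀ a ∈ T, ∀ b, R a b → b ∈ T} with hCdef
  have hSC : S ∈ C := ⟨subset_rfl, hne, fun a _ b hb => hb.2.1⟩
  set K : Set ℕ := {k | ∃ T ∈ C, T.ncard = k} with hKdef
  have hKne : K.Nonempty := ⟨S.ncard, S, hSC, rfl⟩
  obtain ⟨T, hTC, hTcard⟩ := Nat.sInf_mem hKne
  obtain ⟨hTS, hTne, hTclosed⟩ := hTC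
  -- reachable sets from any point of T equal T
  have hreach : ∀ u ∈ T, {b | Relation.ReflTransGen R u b} = T := by
    intro u hu
    set Ru : Set V := {b | Relation.ReflTransGen R u b} with hRudef
    have hRuT : Ru ⊆ T := by
      intro b hb
      induction hb with
      | refl => exact hu
      | tail _ hstep ih => exact hTclosed _ ih _ hstep
    have hRuC : Ru ∈ C := by
      refine ⟨hRuT.trans hTS, ⟨u, Relation.ReflTransGen.refl⟩, ?_⟩
      intro a ha b hab
      exact Relation.ReflTransGen.tail ha hab
    have hle : T.ncard ≤ Ru.ncard := by
      rw [hTcard]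
      exact Nat.sInf_le ⟨Ru, hRuC, rfl⟩
    exact Set.eq_of_subset_of_ncard_le hRuT hle (Set.toFinite T)
  refine ⟨T, hTS, hTne, ?_, ?_, ?_, fun v hv => hterm v (hTS hv), ?_⟩
  · intro v hv hl
    obtain ⟨h1, h2⟩ := hcspec v (hTS hv) (Or.inl hl)
    exact ⟨c v, hTclosed v hv _ ⟨hTS hv, h1, h2, Or.inr rfl⟩, h2⟩
  · intro v hv hl
    obtain ⟨h1, h2⟩ := hcspec v (hTS hv) (Or.inr hl)
    exact ⟨c v, hTclosed v hv _ ⟨hTS hv, h1, h2, Or.inr rfl⟩, h2⟩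
  · intro v hv hl w hw
    exact hTclosed v hv w ⟨hTS hv, havg v (hTS hv) hl w hw, hw, Or.inl hl⟩
  · intro a ha b hb
    have hab : Relation.ReflTransGen R a b := by
      rw [← hreach a ha] at hb; exact hb
    clear hb
    induction hab with
    | refl => exact Relation.ReflTransGen.refl
    | @tail x y hax hstep ih =>
        have hxT : x ∈ T := by
          rw [← hreach a ha]; exact hax
        exact Relation.ReflTransGen.tail ih ⟨hxT, hTclosed x hxT y hstep, hstep.2.2.1⟩
end

section
/- A Simple Stochastic Game G is a Stopping Game if and only if G contains no bad subgraph. -/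
/-- A Simple Stochastic Game is a Stopping Game if and only if it contains
no bad subgraph. -/
theorem stmt1 {V : Type} [Fintype V] (G : SSG V) :
    G.Stopping ↔ ¬ ∃ S : Set V, BadSubgraph G.label G.Arc S := by
  classical
  constructor
  · -- Stopping → no bad subgraph
    rintro hstop ⟨S, hne, hmax, hmin, havg, hterm, _hconn⟩
    -- a choice function staying in S on max/min nodes of S
    set c : V → V := fun v =>
      if h : v ∈ S ∧ (G.label v = NodeLabel.max ∨ G.label v = NodeLabel.min)
      then (h.2.elim (fun hm => hmax v h.1 hm) (fun hm => hmin v h.1 hm)).choose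
      else (G.succ v).1 with hc
    have hpair : G.IsStrategyPair c := by
      intro v hv
      by_cases hvS : v ∈ S
      · have h : v ∈ S ∧ (G.label v = NodeLabel.max ∨ G.label v = NodeLabel.min) :=
          ⟨hvS, hv⟩
        have := (h.2.elim (fun hm => hmax v h.1 hm) (fun hm => hmin v h.1 hm)).choose_spec
        simp only [hc, dif_pos h]
        exact this.2.2.imp Eq.symm Eq.symm
      · have hneg : ¬(v ∈ S ∧ (G.label v = NodeLabel.max ∨ G.label v = NodeLabel.min)) :=
          fun h => hvS h.1
        simp [hc, dif_neg hneg]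
    -- S is closed under StratArc c
    have hclosed : ∀ x ∈ S, ∀ y, G.StratArc c x y → y ∈ S := by
      intro x hx y hxy
      rcases hxy with ⟨hl, hor⟩ | ⟨hmm, hcy⟩
      · exact havg x hx hl y ⟨by simp [hl], hor⟩
      · have h : x ∈ S ∧ (G.label x = NodeLabel.max ∨ G.label x = NodeLabel.min) :=
          ⟨hx, hmm⟩
        have hspec := (h.2.elim (fun hm => hmax x h.1 hm)
          (fun hm => hmin x h.1 hm)).choose_spec
        have : c x = (h.2.elim (fun hm => hmax x h.1 hm)
            (fun hm => hmin x h.1 hm)).choose := by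
          simp only [hc, dif_pos h]
        rw [← hcy, this]
        exact hspec.1
    have hRTclosed : ∀ a b, Relation.ReflTransGen (G.StratArc c) a b → a ∈ S → b ∈ S := by
      intro a b h
      induction h with
      | refl => exact id
      | tail _ hbc ih => exact fun ha => hclosed _ (ih ha) _ hbc
    obtain ⟨x₀, hx₀⟩ := hne
    obtain ⟨t, ht, hpath⟩ := hstop c hpair x₀
    exact hterm t (hRTclosed _ _ hpath hx₀) ht
  · -- no bad subgraph → Stopping
    intro hbad
    by_contra hns
    apply hbad
    rw [SSG.Stopping] at hns
    push_neg at hns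
    obtain ⟨c, hpair, u, hu⟩ := hns
    set R := G.StratArc c with hR
    set RT := Relation.ReflTransGen R with hRT
    -- StratArc implies Arc
    have strat_arc : ∀ x y, R x y → G.Arc x y := by
      intro x y hxy
      rcases hxy with ⟨hl, hor⟩ | ⟨hmm, hcy⟩
      · exact ⟨by simp [hl], hor⟩
      · refine ⟨?_, (hpair x hmm).imp (fun h => h.symm.trans hcy) (fun h => h.symm.trans hcy)⟩
        rcases hmm with h | h <;> simp [h]
    -- T: nodes from which no terminal is reachable
    set T : Set V := {w | ¬ ∃ t, G.label t = NodeLabel.term ∧ RT w t} with hT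
    have huT : u ∈ T := by
      intro ⟨t, ht, hp⟩; exact (hu t ht) hp
    have hTclosed : ∀ w ∈ T, ∀ x, RT w x → x ∈ T := by
      intro w hw x hwx ⟨t, ht, hp⟩
      exact hw ⟨t, ht, hwx.trans hp⟩
    have hTnonterm : ∀ w ∈ T, G.label w ≠ NodeLabel.term := by
      intro w hw hwterm
      exact hw ⟨w, hwterm, Relation.ReflTransGen.refl⟩
    -- reach-set cardinality
    set f : V → ℕ := fun w => (Finset.univ.filter (fun x => RT w x)).card with hf
    have hmono : ∀ a b, RT a b → f b ≤ f a := by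
      intro a b hab
      apply Finset.card_le_card
      intro x hx
      simp only [Finset.mem_filter, Finset.mem_univ, true_and] at hx ⊢
      exact hab.trans hx
    have hback : ∀ a b, RT a b → f a ≤ f b → RT b a := by
      intro a b hab hle
      have hsub : (Finset.univ.filter (fun x => RT b x)) ⊆
          (Finset.univ.filter (fun x => RT a x)) := by
        intro x hx
        simp only [Finset.mem_filter, Finset.mem_univ, true_and] at hx ⊢
        exact hab.trans hx
      have heq := Finset.eq_of_subset_of_card_le hsub hle
      have : a ∈ Finset.univ.filter (fun x => RT b x) := by
        rw [heq]
        exact Finset.mem_filter.mpr ⟨Finset.mem_univ a, Relation.ReflTransGen.refl⟩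
      simpa using (Finset.mem_filter.mp this).2
    -- pick v₀ ∈ T minimizing f
    obtain ⟨v₀, hv₀T, hv₀min⟩ := Set.exists_min_image T f (Set.toFinite T) ⟨u, huT⟩
    set S : Set V := {w | RT v₀ w ∧ RT w v₀} with hS
    have hSsub : ∀ w ∈ S, w ∈ T := fun w hw => hTclosed v₀ hv₀T w hw.1
    have hclosed : ∀ x ∈ S, ∀ y, R x y → y ∈ S := by
      intro x hx y hxy
      have h1 : RT v₀ y := hx.1.trans (Relation.ReflTransGen.single hxy)
      have hyT : y ∈ T := hTclosed v₀ hv₀T y h1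
      have h2 : RT y v₀ := hback v₀ y h1 (hv₀min y hyT)
      exact ⟨h1, h2⟩
    refine ⟨S, ⟨v₀, Relation.ReflTransGen.refl, Relation.ReflTransGen.refl⟩, ?_, ?_, ?_, ?_, ?_⟩
    · -- max nodes
      intro v hv hmax
      refine ⟨c v, hclosed v hv (c v) (Or.inr ⟨Or.inl hmax, rfl⟩), strat_arc v (c v)
        (Or.inr ⟨Or.inl hmax, rfl⟩)⟩
    · -- min nodes
      intro v hv hmin
      refine ⟨c v, hclosed v hv (c v) (Or.inr ⟨Or.inr hmin, rfl⟩), strat_arc v (c v)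
        (Or.inr ⟨Or.inr hmin, rfl⟩)⟩
    · -- avg nodes
      intro v hv havg w hw
      exact hclosed v hv w (Or.inl ⟨havg, hw.2⟩)
    · -- no terminal
      exact fun v hv => hTnonterm v (hSsub v hv)
    · -- strongly connected
      have step : ∀ a b, RT a b → a ∈ S →
          Relation.ReflTransGen (fun x y => x ∈ S ∧ y ∈ S ∧ G.Arc x y) a b := by
        intro a b hab
        induction hab using Relation.ReflTransGen.head_induction_on with
        | refl => exact fun _ => Relation.ReflTransGen.refl
        | @head x m hR' hRT' ih =>
          intro hxS
          have hmS : m ∈ S := hclosed x hxS m hR'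
          exact Relation.ReflTransGen.head ⟨hxS, hmS, strat_arc x m hR'⟩ (ih hmS)
      intro a ha b hb
      exact step a b (ha.2.trans hb.1) ha
end

section
/- Let G be a Stopping Game with n nodes. Then there is a bijective numbering of the nodes of G by the integers 1, …, n which assigns the two terminal nodes the numbers n−1 and n, and such that every non-terminal node has at least one out-arc ending at a node with a strictly higher number. -/
/-!
Fixing any strategy pair shows that from every node some path of arcs leads to a terminal.
Rank the nodes by their distance to the terminals: every non-terminal node has an arc to a node
of smaller rank. Numbering the nodes by decreasing rank, ties broken arbitrarily, gives the
required numbering, and the two terminals, the only nodes of rank 0, get the two top numbers.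
-/

lemma SSG.arc_of_stratArc {V : Type} (G : SSG V) {c : V → V} (hc : G.IsStrategyPair c)
    {u v : V} (h : G.StratArc c u v) : G.Arc u v := by
  rcases h with ⟨havg, hv⟩ | ⟨hmm, rfl⟩
  · exact ⟨by simp [havg], hv⟩
  · refine ⟨by rcases hmm with h | h <;> simp [h], ?_⟩
    rcases hc u hmm with h | h <;> simp [h]

lemma SSG.Stopping.exists_arc_path_to_term {V : Type} {G : SSG V} (hG : G.Stopping) (u : V) :
    ∃ t, G.label t = NodeLabel.term ∧ Relation.ReflTransGen G.Arc u t := by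
  have hc : G.IsStrategyPair (fun v => (G.succ v).1) := fun _ _ => Or.inl rfl
  obtain ⟨t, ht, hpath⟩ := hG _ hc u
  exact ⟨t, ht, Relation.ReflTransGen.mono (fun _ _ => G.arc_of_stratArc hc) _ _ hpath⟩

/-- The nodes from which some `R`-path of length at most `k` ends in `T`. -/
def reachWithin {V : Type*} (R : V → V → Prop) (T : Set V) : ℕ → Set V
  | 0 => T
  | k + 1 => reachWithin R T k ∪ {v | ∃ w ∈ reachWithin R T k, R v w}

lemma exists_mem_reachWithin {V : Type*} {R : V → V → Prop} {T : Set V} {u t : V}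
    (h : Relation.ReflTransGen R u t) (ht : t ∈ T) : ∃ k, u ∈ reachWithin R T k := by
  induction h using Relation.ReflTransGen.head_induction_on with
  | refl => exact ⟨0, ht⟩
  | head huv _ ih =>
    obtain ⟨k, hk⟩ := ih
    exact ⟨k + 1, Or.inr ⟨_, hk, huv⟩⟩

lemma exists_rank_of_forall_reflTransGen {V : Type*} (R : V → V → Prop) (T : Set V)
    (h : ∀ u, ∃ t ∈ T, Relation.ReflTransGen R u t) :
    ∃ d : V → ℕ, (∀ t ∈ T, d t = 0) ∧ ∀ v ∉ T, ∃ w, R v w ∧ d w < d v := by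
  classical
  have hreach (u : V) : ∃ k, u ∈ reachWithin R T k := by
    obtain ⟨t, ht, hut⟩ := h u
    exact exists_mem_reachWithin hut ht
  refine ⟨fun u => Nat.find (hreach u), fun t ht => (Nat.find_eq_zero _).2 ht, fun v hv => ?_⟩
  obtain ⟨k, hk⟩ : ∃ k, Nat.find (hreach v) = k + 1 :=
    Nat.exists_eq_succ_of_ne_zero fun h0 => hv <| by
      simpa [h0, reachWithin] using Nat.find_spec (hreach v)
  have hin : v ∈ reachWithin R T (k + 1) := by rw [← hk]; exact Nat.find_spec (hreach v)
  have hout : v ∉ reachWithin R T k := Nat.find_min (hreach v) (by omega)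
  obtain ⟨w, hw, hvw⟩ := hin.resolve_left hout
  refine ⟨w, hvw, ?_⟩
  change Nat.find (hreach w) < Nat.find (hreach v)
  exact hk ▸ Nat.lt_succ_of_le (Nat.find_min' _ hw)

lemma exists_numbering_antitone {V α : Type*} [Fintype V] [LinearOrder α] (d : V → α) :
    ∃ f : V → ℕ, Function.Injective f ∧ Set.range f = Set.Icc 1 (Fintype.card V) ∧
      ∀ v w, d v < d w → f w < f v := by
  set n := Fintype.card V
  let key : V → α ×ₗ Fin n := fun v => toLex (d v, Fintype.equivFin V v)
  have hkey : Function.Injective key := fun v w h =>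
    (Fintype.equivFin V).injective (Prod.ext_iff.1 (toLex.injective h)).2
  let _ : LinearOrder V := LinearOrder.lift' key hkey
  let o : V ≃o Fin n := (Fintype.orderIsoFinOfCardEq V rfl).symm
  refine ⟨fun v => n - o v, fun v w h => ?_, ?_, fun v w h => ?_⟩
  · dsimp only at h
    have := (o v).isLt
    have := (o w).isLt
    exact o.injective (Fin.ext (by omega))
  · ext k
    simp only [Set.mem_range, Set.mem_Icc]
    constructor
    · rintro ⟨v, rfl⟩
      have := (o v).isLt
      omega
    · rintro ⟨h1, h2⟩
      exact ⟨o.symm ⟨n - k, by omega⟩, by simp only [OrderIso.apply_symm_apply]; omega⟩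
  · have hvw : v < w := Prod.Lex.toLex_lt_toLex.2 (Or.inl h)
    have : (o v : ℕ) < o w := o.lt_iff_lt.2 hvw
    have := (o w).isLt
    dsimp only
    omega

lemma pair_eq_top_two {V : Type*} [Fintype V] {f : V → ℕ} (hf : Function.Injective f)
    (hrange : Set.range f = Set.Icc 1 (Fintype.card V)) {a b : V} (hab : a ≠ b)
    (htop : ∀ v, v ≠ a → v ≠ b → f v < f a ∧ f v < f b) :
    ({f a, f b} : Set ℕ) = {Fintype.card V - 1, Fintype.card V} := by
  set n := Fintype.card V
  have hn : 1 < n := Fintype.one_lt_card_iff.2 ⟨a, b, hab⟩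
  have hle (v : V) : f v ≤ n := (hrange ▸ Set.mem_range_self v : f v ∈ Set.Icc 1 n).2
  have hattained (k : ℕ) (hk : k ∈ Set.Icc 1 n) : ∃ v, f v = k := (hrange ▸ hk : k ∈ Set.range f)
  have htop_two (v : V) (hv : n - 1 ≤ f v) : v = a ∨ v = b := by
    by_contra! hne
    have := htop v hne.1 hne.2
    have := hle a
    have := hle b
    have := hf.ne hab
    omega
  obtain ⟨u, hu⟩ := hattained n ⟨by omega, le_rfl⟩
  obtain ⟨u', hu'⟩ := hattained (n - 1) ⟨by omega, by omega⟩
  rcases htop_two u (by omega) with rfl | rfl <;> rcases htop_two u' (by omega) with rfl | rfl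
  · omega
  · rw [hu, hu', Set.pair_comm]
  · rw [hu, hu']
  · omega

/-- In a Stopping Game with `n` nodes, the nodes can be numbered
bijectively by the integers `1, …, n` so that the two terminal nodes receive the
numbers `n - 1` and `n`, and every non-terminal node has at least one out-arc ending at
a strictly higher-numbered node. -/
theorem stmt2 {V : Type} [Fintype V] (G : SSG V) (hG : G.Stopping) :
    ∃ f : V → ℕ, Function.Injective f ∧
      Set.range f = Set.Icc 1 (Fintype.card V) ∧
      ({f G.t0, f G.t1} : Set ℕ) = {Fintype.card V - 1, Fintype.card V} ∧
      ∀ v, G.label v ≠ NodeLabel.term → ∃ w, G.Arc v w ∧ f v < f w := by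
  obtain ⟨d, hd_term, hd_desc⟩ := exists_rank_of_forall_reflTransGen G.Arc
    {v | G.label v = NodeLabel.term} fun u => hG.exists_arc_path_to_term u
  obtain ⟨f, hf_inj, hf_range, hf_anti⟩ := exists_numbering_antitone d
  refine ⟨f, hf_inj, hf_range, pair_eq_top_two hf_inj hf_range G.t0_ne_t1 fun v h0 h1 => ?_,
    fun v hv => ?_⟩
  · have hv : G.label v ≠ NodeLabel.term := by simp [G.term_iff, h0, h1]
    obtain ⟨w, -, hwv⟩ := hd_desc v hv
    have hlt (t : V) (ht : G.label t = NodeLabel.term) : f v < f t :=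
      hf_anti _ _ (by rw [hd_term t ht]; omega)
    exact ⟨hlt _ ((G.term_iff _).2 (Or.inl rfl)), hlt _ ((G.term_iff _).2 (Or.inr rfl))⟩
  · obtain ⟨w, harc, hlt⟩ := hd_desc v hv
    exact ⟨w, harc, hf_anti _ _ hlt⟩
end

section
/- Let G be a finite directed graph whose nodes are numbered 1, …, n and are each labeled max, min, average, or terminal, where exactly the nodes numbered n−1 and n are terminal and have no out-arcs, every max node and every min node has exactly one out-arc, every average node has one or two out-arcs, and every non-terminal node has at least one out-arc ending at a strictly higher-numbered node. Then G contains no bad subgraph; in particular, every node of G has a directed path to a terminal node. -/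
section

variable {V : Type} {label : V → NodeLabel} {A : V → V → Prop}

theorem BadSubgraph.mem_of_arc {S : Set V} (hS : BadSubgraph label A S)
    (hmax : ∀ v, label v = NodeLabel.max → ∀ w₁ w₂, A v w₁ → A v w₂ → w₁ = w₂)
    (hmin : ∀ v, label v = NodeLabel.min → ∀ w₁ w₂, A v w₁ → A v w₂ → w₁ = w₂)
    {v w : V} (hv : v ∈ S) (hvw : A v w) : w ∈ S := by
  obtain ⟨-, hSmax, hSmin, hSavg, hSterm, -⟩ := hS
  cases hl : label v with
  | max =>
    obtain ⟨u, huS, hvu⟩ := hSmax v hv hl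
    rwa [hmax v hl w u hvw hvu]
  | min =>
    obtain ⟨u, huS, hvu⟩ := hSmin v hv hl
    rwa [hmin v hl w u hvw hvu]
  | avg => exact hSavg v hv hl w hvw
  | term => exact absurd hl (hSterm v hv)

variable [Preorder V] [Finite V]

theorem not_badSubgraph_of_exists_arc_gt
    (hup : ∀ v, label v ≠ NodeLabel.term → ∃ w, A v w ∧ v < w)
    (hmax : ∀ v, label v = NodeLabel.max → ∀ w₁ w₂, A v w₁ → A v w₂ → w₁ = w₂)
    (hmin : ∀ v, label v = NodeLabel.min → ∀ w₁ w₂, A v w₁ → A v w₂ → w₁ = w₂)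
    (S : Set V) : ¬ BadSubgraph label A S := by
  intro hS
  obtain ⟨hne, -, -, -, hnoterm, -⟩ := id hS
  obtain ⟨v, hv⟩ := S.toFinite.exists_maximal hne
  obtain ⟨w, hvw, hlt⟩ := hup v (hnoterm v hv.prop)
  exact hlt.not_ge (hv.le_of_ge (hS.mem_of_arc hmax hmin hv.prop hvw) hlt.le)

theorem exists_term_reflTransGen_of_exists_arc_gt
    (hup : ∀ v, label v ≠ NodeLabel.term → ∃ w, A v w ∧ v < w) (v : V) :
    ∃ t, label t = NodeLabel.term ∧ Relation.ReflTransGen A v t := by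
  induction v using WellFoundedGT.induction with
  | _ v ih =>
    by_cases hv : label v = NodeLabel.term
    · exact ⟨v, hv, .refl⟩
    · obtain ⟨w, hvw, hlt⟩ := hup v hv
      obtain ⟨t, ht, hwt⟩ := ih w hlt
      exact ⟨t, ht, .head hvw hwt⟩

end

theorem stmt3_general (n : ℕ) (label : Fin n → NodeLabel) (A : Fin n → Fin n → Prop)
    (hmax : ∀ v, label v = NodeLabel.max → ∃! w, A v w)
    (hmin : ∀ v, label v = NodeLabel.min → ∃! w, A v w)
    (hup : ∀ v, label v ≠ NodeLabel.term → ∃ w, A v w ∧ v < w) :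
    (¬ ∃ S : Set (Fin n), BadSubgraph label A S) ∧
      ∀ v, ∃ t, label t = NodeLabel.term ∧ Relation.ReflTransGen A v t :=
  ⟨fun ⟨S, hS⟩ => not_badSubgraph_of_exists_arc_gt hup (fun v hv _ _ => (hmax v hv).unique)
      (fun v hv _ _ => (hmin v hv).unique) S hS,
    exists_term_reflTransGen_of_exists_arc_gt hup⟩

/-- Let `G` be a finite labeled directed graph whose nodes are numbered
`1, …, n` (node `v : Fin n` carries the number `v + 1`), where exactly the nodes
numbered `n - 1` and `n` are terminal and have no out-arcs, every max node and every
min node has exactly one out-arc, every average node has one or two out-arcs, and every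
non-terminal node has at least one out-arc ending at a strictly higher-numbered node.
Then `G` contains no bad subgraph, and every node has a directed path to a terminal. -/
theorem stmt3 (n : ℕ) (hn : 2 ≤ n) (label : Fin n → NodeLabel) (A : Fin n → Fin n → Prop)
    (hterm_iff : ∀ v : Fin n,
      label v = NodeLabel.term ↔ ((v : ℕ) = n - 2 ∨ (v : ℕ) = n - 1))
    (hterm_out : ∀ v, label v = NodeLabel.term → ∀ w, ¬ A v w)
    (hmax : ∀ v, label v = NodeLabel.max → ∃! w, A v w)
    (hmin : ∀ v, label v = NodeLabel.min → ∃! w, A v w)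
    (havg : ∀ v, label v = NodeLabel.avg → (∃ w, A v w) ∧
      ∀ w₁ w₂ w₃, A v w₁ → A v w₂ → A v w₃ → (w₁ = w₂ ∨ w₁ = w₃ ∨ w₂ = w₃))
    (hup : ∀ v, label v ≠ NodeLabel.term → ∃ w, A v w ∧ v < w) :
    (¬ ∃ S : Set (Fin n), BadSubgraph label A S) ∧
      ∀ v, ∃ t, label t = NodeLabel.term ∧ Relation.ReflTransGen A v t :=
  stmt3_general n label A hmax hmin hup
end

section
/- Let G be a finite directed graph whose nodes are each labeled max, min, average, or terminal, in which every non-terminal node has at least one out-arc. Let S be a set of non-terminal nodes of G such that every average node in S has all of its out-arcs ending in S and every max and min node in S has at least one out-arc ending in S. Let Q₀ be a set of nodes with Q₀ ∩ S = ∅, and let Q be the closure of Q₀ under the two rules: (a) every average node having at least one out-arc that ends in the current set or at a terminal node is added; (b) every max or min node all of whose out-arcs end in the current set is added. Then Q ∩ S = ∅. -/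
/-- Let `G` be a finite labeled directed graph in which terminal nodes
have no out-arcs and every non-terminal node has at least one out-arc. Let `S` be a set
of non-terminal nodes such that every average node in `S` has all of its out-arcs
ending in `S` and every max and min node in `S` has at least one out-arc ending in `S`.
Let `Q₀` be a set of nodes disjoint from `S`, and let `Q` be the least set containing
`Q₀` that is closed under the rules: (a) every average node with at least one out-arc
ending in the set or at a terminal node is added; (b) every max or min node all of
whose out-arcs end in the set is added. Then `Q ∩ S = ∅`. -/
theorem stmt5 {V : Type} [Fintype V] (label : V → NodeLabel) (A : V → V → Prop)
    (hterm_out : ∀ v, label v = NodeLabel.term → ∀ w, ¬ A v w)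
    (hout : ∀ v, label v ≠ NodeLabel.term → ∃ w, A v w)
    (S : Set V)
    (hSnt : ∀ v ∈ S, label v ≠ NodeLabel.term)
    (hSavg : ∀ v ∈ S, label v = NodeLabel.avg → ∀ w, A v w → w ∈ S)
    (hSmm : ∀ v ∈ S, (label v = NodeLabel.max ∨ label v = NodeLabel.min) →
      ∃ w ∈ S, A v w)
    (Q₀ : Set V) (hQ₀ : Q₀ ∩ S = ∅) :
    (⋂₀ {Q : Set V | Q₀ ⊆ Q ∧
      (∀ v, label v = NodeLabel.avg →
        (∃ w, A v w ∧ (w ∈ Q ∨ label w = NodeLabel.term)) → v ∈ Q) ∧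
      (∀ v, (label v = NodeLabel.max ∨ label v = NodeLabel.min) →
        (∀ w, A v w → w ∈ Q) → v ∈ Q)}) ∩ S = ∅ := by

  apply Set.eq_empty_iff_forall_notMem.mpr
  rintro v ⟨hvQ, hvS⟩
  have : v ∈ Sᶜ := hvQ Sᶜ ⟨fun x hx hxS => (Set.eq_empty_iff_forall_notMem.mp hQ₀ x) ⟨hx, hxS⟩,
    fun u hu ⟨w, hw, hor⟩ huS => by
      have hwS := hSavg u huS hu w hw
      rcases hor with h | h
      · exact h hwS
      · exact hSnt w hwS h,
    fun u hu hall huS => by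
      obtain ⟨w, hwS, hw⟩ := hSmm u huS hu
      exact hall w hw hwS⟩
  exact this hvS
end

section
/- Let G be a finite directed graph whose nodes are each labeled max, min, average, or terminal, in which every non-terminal node has at least one out-arc and no max or min node has an out-arc ending at a terminal node. Let Q be a set of nodes of G containing no terminal node such that: every average node with at least one out-arc ending in Q or at a terminal node belongs to Q, and every max or min node all of whose out-arcs end in Q belongs to Q. Then for every non-terminal node w ∉ Q, the set R of all nodes reachable from w by directed paths none of whose nodes lie in Q (with w ∈ R) contains no terminal node, every average node in R has all of its out-arcs ending in R, every max and min node in R has at least one out-arc ending in R, and consequently R contains a bad subgraph of G. -/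
open Relation

variable {V : Type} {label : V → NodeLabel} {A : V → V → Prop}

structure IsTrap (label : V → NodeLabel) (A : V → V → Prop) (T : Set V) : Prop where
  nonempty : T.Nonempty
  avg_closed : ∀ v ∈ T, label v = NodeLabel.avg → ∀ u, A v u → u ∈ T
  exists_succ : ∀ v ∈ T, ∃ u ∈ T, A v u

namespace IsTrap

variable {T : Set V}

theorem reachableWithin {u : V} (hT : IsTrap label A T) (hu : u ∈ T) :
    IsTrap label A {x | x ∈ T ∧ ReflTransGen (fun a b => a ∈ T ∧ b ∈ T ∧ A a b) u x} where
  nonempty := ⟨u, hu, .refl⟩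
  avg_closed x hx hl s hxs :=
    have hs : s ∈ T := hT.avg_closed x hx.1 hl s hxs
    ⟨hs, hx.2.tail ⟨hx.1, hs, hxs⟩⟩
  exists_succ x hx :=
    let ⟨s, hs, hxs⟩ := hT.exists_succ x hx.1
    ⟨s, ⟨hs, hx.2.tail ⟨hx.1, hs, hxs⟩⟩, hxs⟩

theorem reflTransGen_of_minimal (hT : Minimal (IsTrap label A) T) {u v : V}
    (hu : u ∈ T) (hv : v ∈ T) : ReflTransGen (fun a b => a ∈ T ∧ b ∈ T ∧ A a b) u v := by
  have hreach := hT.eq_of_subset (hT.prop.reachableWithin hu) fun _ hx => hx.1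
  rw [← hreach] at hv
  exact hv.2

theorem exists_badSubgraph_subset [Finite V] (hT : IsTrap label A T)
    (hnt : ∀ v ∈ T, label v ≠ NodeLabel.term) : ∃ S ⊆ T, BadSubgraph label A S := by
  obtain ⟨S, hST, hS⟩ := exists_minimal_le_of_wellFoundedLT (IsTrap label A) T hT
  have hsucc := hS.prop.exists_succ
  exact ⟨S, hST, hS.prop.nonempty, fun v hv _ => hsucc v hv, fun v hv _ => hsucc v hv,
    hS.prop.avg_closed, fun v hv => hnt v (hST hv),
    fun _ hu _ hv => reflTransGen_of_minimal hS hu hv⟩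

end IsTrap

section Avoiding

variable {Q : Set V} {w v : V}

theorem notMem_of_reflTransGen_avoiding (hwQ : w ∉ Q)
    (h : ReflTransGen (fun a b => b ∉ Q ∧ A a b) w v) : v ∉ Q := by
  rcases h.cases_tail with rfl | ⟨_, -, hv, -⟩
  exacts [hwQ, hv]

theorem label_ne_term_of_reflTransGen_avoiding
    (hmm_term : ∀ v, (label v = NodeLabel.max ∨ label v = NodeLabel.min) →
      ∀ t, A v t → label t ≠ NodeLabel.term)
    (hQa : ∀ v, label v = NodeLabel.avg →
      (∃ u, A v u ∧ (u ∈ Q ∨ label u = NodeLabel.term)) → v ∈ Q)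
    (hw : label w ≠ NodeLabel.term) (hwQ : w ∉ Q)
    (h : ReflTransGen (fun a b => b ∉ Q ∧ A a b) w v) : label v ≠ NodeLabel.term := by
  induction h with
  | refl => exact hw
  | @tail b c hwb hbc ih =>
    cases hb : label b with
    | term => exact absurd hb ih
    | avg =>
      exact fun hc => notMem_of_reflTransGen_avoiding hwQ hwb (hQa b hb ⟨c, hbc.2, .inr hc⟩)
    | max => exact hmm_term b (.inl hb) c hbc.2
    | min => exact hmm_term b (.inr hb) c hbc.2

theorem isTrap_setOf_reflTransGen_avoiding
    (hout : ∀ v, label v ≠ NodeLabel.term → ∃ u, A v u)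
    (hmm_term : ∀ v, (label v = NodeLabel.max ∨ label v = NodeLabel.min) →
      ∀ t, A v t → label t ≠ NodeLabel.term)
    (hQa : ∀ v, label v = NodeLabel.avg →
      (∃ u, A v u ∧ (u ∈ Q ∨ label u = NodeLabel.term)) → v ∈ Q)
    (hQb : ∀ v, (label v = NodeLabel.max ∨ label v = NodeLabel.min) →
      (∀ u, A v u → u ∈ Q) → v ∈ Q)
    (hw : label w ≠ NodeLabel.term) (hwQ : w ∉ Q) :
    IsTrap label A {v | ReflTransGen (fun a b => b ∉ Q ∧ A a b) w v} := by
  set R := {v | ReflTransGen (fun a b => b ∉ Q ∧ A a b) w v}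
  have hnQ : ∀ r ∈ R, r ∉ Q := fun _ hr => notMem_of_reflTransGen_avoiding hwQ hr
  have havg : ∀ r ∈ R, label r = NodeLabel.avg → ∀ u, A r u → u ∈ R := fun r hr hl u hru =>
    hr.tail ⟨fun huQ => hnQ r hr (hQa r hl ⟨u, hru, .inl huQ⟩), hru⟩
  refine ⟨⟨w, .refl⟩, havg, fun r hr => ?_⟩
  obtain hl | hl | hl : label r = NodeLabel.avg ∨ label r = NodeLabel.term ∨
      (label r = NodeLabel.max ∨ label r = NodeLabel.min) := by
    cases label r <;> simp
  · obtain ⟨u, hru⟩ := hout r (by simp [hl])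
    exact ⟨u, havg r hr hl u hru, hru⟩
  · exact absurd hl (label_ne_term_of_reflTransGen_avoiding hmm_term hQa hw hwQ hr)
  · by_contra! hno
    exact hnQ r hr <| hQb r hl fun u hru => by_contra fun huQ => hno u (hr.tail ⟨huQ, hru⟩) hru

end Avoiding

theorem stmt6_general {V : Type} [Fintype V] (label : V → NodeLabel) (A : V → V → Prop)
    (hout : ∀ v, label v ≠ NodeLabel.term → ∃ u, A v u)
    (hmm_term : ∀ v, (label v = NodeLabel.max ∨ label v = NodeLabel.min) →
      ∀ t, A v t → label t ≠ NodeLabel.term)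
    (Q : Set V)
    (hQa : ∀ v, label v = NodeLabel.avg →
      (∃ u, A v u ∧ (u ∈ Q ∨ label u = NodeLabel.term)) → v ∈ Q)
    (hQb : ∀ v, (label v = NodeLabel.max ∨ label v = NodeLabel.min) →
      (∀ u, A v u → u ∈ Q) → v ∈ Q)
    (w : V) (hw : label w ≠ NodeLabel.term) (hwQ : w ∉ Q) :
    let R : Set V := {v | Relation.ReflTransGen (fun a b => b ∉ Q ∧ A a b) w v}
    (∀ r ∈ R, label r ≠ NodeLabel.term) ∧
    (∀ r ∈ R, label r = NodeLabel.avg → ∀ u, A r u → u ∈ R) ∧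
    (∀ r ∈ R, (label r = NodeLabel.max ∨ label r = NodeLabel.min) → ∃ u ∈ R, A r u) ∧
    ∃ S ⊆ R, BadSubgraph label A S := by
  intro R
  have hR : IsTrap label A R := isTrap_setOf_reflTransGen_avoiding hout hmm_term hQa hQb hw hwQ
  have hnt : ∀ r ∈ R, label r ≠ NodeLabel.term := fun _ hr =>
    label_ne_term_of_reflTransGen_avoiding hmm_term hQa hw hwQ hr
  exact ⟨hnt, hR.avg_closed, fun r hr _ => hR.exists_succ r hr, hR.exists_badSubgraph_subset hnt⟩

/-- Let `G` be a finite labeled directed graph in which terminal nodes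
have no out-arcs, every non-terminal node has at least one out-arc, and no max or min
node has an out-arc ending at a terminal node. Let `Q` be a set of nodes containing no
terminal node such that every average node with at least one out-arc ending in `Q` or
at a terminal node belongs to `Q`, and every max or min node all of whose out-arcs end
in `Q` belongs to `Q`. Then for every non-terminal node `w ∉ Q`, the set `R` of all
nodes reachable from `w` by directed paths avoiding `Q` contains no terminal node,
every average node in `R` has all of its out-arcs ending in `R`, every max and min node
in `R` has at least one out-arc ending in `R`, and `R` contains a bad subgraph. -/
theorem stmt6 {V : Type} [Fintype V] (label : V → NodeLabel) (A : V → V → Prop)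
    (hterm_out : ∀ v, label v = NodeLabel.term → ∀ u, ¬ A v u)
    (hout : ∀ v, label v ≠ NodeLabel.term → ∃ u, A v u)
    (hmm_term : ∀ v, (label v = NodeLabel.max ∨ label v = NodeLabel.min) →
      ∀ t, A v t → label t ≠ NodeLabel.term)
    (Q : Set V)
    (hQnt : ∀ q ∈ Q, label q ≠ NodeLabel.term)
    (hQa : ∀ v, label v = NodeLabel.avg →
      (∃ u, A v u ∧ (u ∈ Q ∨ label u = NodeLabel.term)) → v ∈ Q)
    (hQb : ∀ v, (label v = NodeLabel.max ∨ label v = NodeLabel.min) →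
      (∀ u, A v u → u ∈ Q) → v ∈ Q)
    (w : V) (hw : label w ≠ NodeLabel.term) (hwQ : w ∉ Q) :
    let R : Set V := {v | Relation.ReflTransGen (fun a b => b ∉ Q ∧ A a b) w v}
    (∀ r ∈ R, label r ≠ NodeLabel.term) ∧
    (∀ r ∈ R, label r = NodeLabel.avg → ∀ u, A r u → u ∈ R) ∧
    (∀ r ∈ R, (label r = NodeLabel.max ∨ label r = NodeLabel.min) → ∃ u ∈ R, A r u) ∧
    ∃ S ⊆ R, BadSubgraph label A S :=
  stmt6_general label A hout hmm_term Q hQa hQb w hw hwQ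
end

section
/- Let G be a Stopping Game and let C be the least set of nodes of G containing terminal-0 and closed under the rules: every min or average node with at least one out-arc ending in C belongs to C, and every max node with both of its out-arcs ending in C belongs to C. Then for every stable assignment v of G and every node i of G, v(i) = 1 if and only if i ∉ C. -/
lemma ssg_key {V : Type} [Fintype V] (G : SSG V) (hG : G.Stopping) (C : Set V)
    (h0 : G.t0 ∈ C)
    (hmin : ∀ i, (G.label i = NodeLabel.min ∨ G.label i = NodeLabel.avg) →
      (∃ w ∈ C, G.Arc i w) → i ∈ C)
    (hmax : ∀ i, G.label i = NodeLabel.max → (∀ w, G.Arc i w → w ∈ C) → i ∈ C)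
    (hleast : ∀ D : Set V, G.t0 ∈ D →
      (∀ i, (G.label i = NodeLabel.min ∨ G.label i = NodeLabel.avg) →
        (∃ w ∈ D, G.Arc i w) → i ∈ D) →
      (∀ i, G.label i = NodeLabel.max → (∀ w, G.Arc i w → w ∈ D) → i ∈ D) → C ⊆ D)
    (v : V → ℝ) (hv : G.Stable v) (i : V) : v i = 1 ↔ i ∉ C := by
  classical
  obtain ⟨hbound, h0v, h1v, hmaxv, hminv, havgv⟩ := hv
  have hle1 : ∀ j, v j ≤ 1 := fun j => (hbound j).2
  constructor
  · -- v i = 1 → i ∉ C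
    intro h1 hiC
    have hD : C ⊆ {j : V | v j ≠ 1} := by
      apply hleast
      · show v G.t0 ≠ 1
        rw [h0v]; norm_num
      · rintro j hj ⟨w, hwD, hterm, hor⟩
        have hw1 : v w < 1 := lt_of_le_of_ne (hle1 w) hwD
        show v j ≠ 1
        rcases hj with hj | hj
        · have := hminv j hj
          rcases hor with h | h <;> rw [h] at this <;>
            [exact ne_of_lt (lt_of_le_of_lt (this ▸ min_le_left _ _) hw1);
             exact ne_of_lt (lt_of_le_of_lt (this ▸ min_le_right _ _) hw1)]
        · have heq := havgv j hj
          have h1 := hle1 (G.succ j).1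
          have h2 := hle1 (G.succ j).2
          intro hcon
          rcases hor with h | h <;> rw [h] at heq <;> linarith [hw1]
      · intro j hj hall
        have hjne : G.label j ≠ NodeLabel.term := by rw [hj]; decide
        have h1 : v (G.succ j).1 < 1 :=
          lt_of_le_of_ne (hle1 _) (hall _ ⟨hjne, Or.inl rfl⟩)
        have h2 : v (G.succ j).2 < 1 :=
          lt_of_le_of_ne (hle1 _) (hall _ ⟨hjne, Or.inr rfl⟩)
        show v j ≠ 1
        rw [hmaxv j hj]
        exact ne_of_lt (max_lt h1 h2)
    exact hD hiC h1
  · -- i ∉ C → v i = 1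
    intro hiC
    by_contra hne
    have hvi1 : v i < 1 := lt_of_le_of_ne (hle1 i) hne
    have hSne : (Finset.univ.filter fun j : V => j ∉ C).Nonempty :=
      ⟨i, by simp [hiC]⟩
    obtain ⟨j₀, hj₀mem, hj₀min⟩ := Finset.exists_min_image _ v hSne
    have hj₀C : j₀ ∉ C := by simpa using hj₀mem
    set m := v j₀ with hm
    have hm_le : ∀ j, j ∉ C → m ≤ v j := fun j hj => hj₀min j (by simp [hj])
    have hm_lt : m < 1 := lt_of_le_of_lt (hm_le i hiC) hvi1
    set W : Set V := {j | j ∉ C ∧ v j = m} with hW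
    -- all out-arcs of min/avg nodes outside C stay outside C
    have hP1 : ∀ j, j ∉ C → (G.label j = NodeLabel.min ∨ G.label j = NodeLabel.avg) →
        ∀ w, G.Arc j w → w ∉ C := by
      intro j hj hlab w harc hwC
      exact hj (hmin j hlab ⟨w, hwC, harc⟩)
    -- max nodes outside C have an out-arc outside C
    have hP2 : ∀ j, j ∉ C → G.label j = NodeLabel.max → ∃ w, G.Arc j w ∧ w ∉ C := by
      intro j hj hlab
      by_contra hcon
      push_neg at hcon
      exact hj (hmax j hlab hcon)
    -- every max/min node in W has a successor in W
    have hWit : ∀ b ∈ W, (G.label b = NodeLabel.max ∨ G.label b = NodeLabel.min) →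
        ∃ w ∈ W, (G.succ b).1 = w ∨ (G.succ b).2 = w := by
      rintro b ⟨hbC, hbm⟩ hlab
      have hbne : G.label b ≠ NodeLabel.term := by
        rcases hlab with h | h <;> rw [h] <;> decide
      rcases hlab with hlab | hlab
      · -- max
        obtain ⟨w, harc, hwC⟩ := hP2 b hbC hlab
        have hwm : v w = m := by
          have heq := hmaxv b hlab
          have hub : v w ≤ v b := by
            rcases harc.2 with h | h <;> rw [← h, heq]
            · exact le_max_left _ _
            · exact le_max_right _ _
          exact le_antisymm (by rw [← hbm]; exact hub) (hm_le w hwC)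
        exact ⟨w, ⟨hwC, hwm⟩, harc.2⟩
      · -- min
        have h1C : (G.succ b).1 ∉ C := hP1 b hbC (Or.inl hlab) _ ⟨hbne, Or.inl rfl⟩
        have h2C : (G.succ b).2 ∉ C := hP1 b hbC (Or.inl hlab) _ ⟨hbne, Or.inr rfl⟩
        have heq := hminv b hlab
        rcases le_total (v (G.succ b).1) (v (G.succ b).2) with h | h
        · refine ⟨(G.succ b).1, ⟨h1C, ?_⟩, Or.inl rfl⟩
          rw [min_eq_left h] at heq
          rw [← heq, hbm]
        · refine ⟨(G.succ b).2, ⟨h2C, ?_⟩, Or.inr rfl⟩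
          rw [min_eq_right h] at heq
          rw [← heq, hbm]
    -- the strategy
    set c : V → V := fun j => if (G.succ j).1 ∈ W then (G.succ j).1 else (G.succ j).2
      with hc_def
    have hc : G.IsStrategyPair c := by
      intro j _
      by_cases h : (G.succ j).1 ∈ W <;> simp [hc_def, h]
    -- chosen successor of max/min node in W is in W
    have hcW : ∀ b ∈ W, (G.label b = NodeLabel.max ∨ G.label b = NodeLabel.min) →
        c b ∈ W := by
      intro b hbW hlab
      obtain ⟨w, hwW, hor⟩ := hWit b hbW hlab
      by_cases h : (G.succ b).1 ∈ W
      · simpa [hc_def, h] using h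
      · have : (G.succ b).2 = w := by
          rcases hor with h' | h'
          · exact absurd (h' ▸ hwW) h
          · exact h'
        simp only [hc_def, if_neg h]
        rw [this]; exact hwW
    -- single step stays in W
    have hstep : ∀ b ∈ W, ∀ x, G.StratArc c b x → x ∈ W := by
      rintro b hbW x (⟨hlab, hor⟩ | ⟨hlab, hcx⟩)
      · -- avg node
        obtain ⟨hbC, hbm⟩ := hbW
        have hbne : G.label b ≠ NodeLabel.term := by rw [hlab]; decide
        have h1C : (G.succ b).1 ∉ C := hP1 b hbC (Or.inr hlab) _ ⟨hbne, Or.inl rfl⟩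
        have h2C : (G.succ b).2 ∉ C := hP1 b hbC (Or.inr hlab) _ ⟨hbne, Or.inr rfl⟩
        have heq := havgv b hlab
        have hg1 := hm_le _ h1C
        have hg2 := hm_le _ h2C
        have he1 : v (G.succ b).1 = m := by rw [hbm] at heq; linarith
        have he2 : v (G.succ b).2 = m := by rw [hbm] at heq; linarith
        rcases hor with h | h <;> rw [← h]
        · exact ⟨h1C, he1⟩
        · exact ⟨h2C, he2⟩
      · rw [← hcx]
        exact hcW b hbW hlab
    -- paths stay in W
    have hreach : ∀ {a b : V}, Relation.ReflTransGen (G.StratArc c) a b →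
        a ∈ W → b ∈ W := by
      intro a b h
      induction h with
      | refl => exact id
      | tail _ hstep' ih => exact fun ha => hstep _ (ih ha) _ hstep'
    obtain ⟨t, htterm, hpath⟩ := hG c hc j₀
    have htW : t ∈ W := hreach hpath ⟨hj₀C, rfl⟩
    rcases (G.term_iff t).1 htterm with rfl | rfl
    · exact htW.1 h0
    · have h' := htW.2
      rw [h1v] at h'
      linarith

/-- Let `C` be the least set of nodes of a Stopping Game containing
terminal-0 and closed under the rules: every min or average node with at least one
out-arc ending in `C` belongs to `C`, and every max node with both of its out-arcs
ending in `C` belongs to `C`. Then for every stable assignment `v` and every node `i`,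
`v i = 1` iff `i ∉ C`. -/
theorem stmt8 {V : Type} [Fintype V] (G : SSG V) (hG : G.Stopping) :
    let C : Set V := ⋂₀ {C : Set V | G.t0 ∈ C ∧
      (∀ i, (G.label i = NodeLabel.min ∨ G.label i = NodeLabel.avg) →
        (∃ w ∈ C, G.Arc i w) → i ∈ C) ∧
      (∀ i, G.label i = NodeLabel.max → (∀ w, G.Arc i w → w ∈ C) → i ∈ C)}
    ∀ v : V → ℝ, G.Stable v → ∀ i, (v i = 1 ↔ i ∉ C) := by
  intro C v hv i
  refine ssg_key G hG C ?_ ?_ ?_ ?_ v hv i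
  · exact fun D hD => hD.1
  · rintro j hj ⟨w, hwC, harc⟩ D hD
    exact hD.2.1 j hj ⟨w, hwC D hD, harc⟩
  · intro j hj hall D hD
    exact hD.2.2 j hj fun w harc => hall w harc D hD
  · intro D hD0 hDmin hDmax
    exact Set.sInter_subset_of_mem ⟨hD0, hDmin, hDmax⟩
end

section
/- Let G be a Stopping Game and let C be the least set of nodes of G containing terminal-1 and closed under the rules: every max or average node with at least one out-arc ending in C belongs to C, and every min node with both of its out-arcs ending in C belongs to C. Then for every stable assignment v of G and every node i of G, v(i) = 0 if and only if i ∉ C. -/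
/-- Let `C` be the least set of nodes of a Stopping Game containing
terminal-1 and closed under the rules: every max or average node with at least one
out-arc ending in `C` belongs to `C`, and every min node with both of its out-arcs
ending in `C` belongs to `C`. Then for every stable assignment `v` and every node `i`,
`v i = 0` iff `i ∉ C`. -/
theorem stmt9 {V : Type} [Fintype V] (G : SSG V) (hG : G.Stopping) :
    let C : Set V := ⋂₀ {C : Set V | G.t1 ∈ C ∧
      (∀ i, (G.label i = NodeLabel.max ∨ G.label i = NodeLabel.avg) →
        (∃ w ∈ C, G.Arc i w) → i ∈ C) ∧
      (∀ i, G.label i = NodeLabel.min → (∀ w, G.Arc i w → w ∈ C) → i ∈ C)}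
    ∀ v : V → ℝ, G.Stable v → ∀ i, (v i = 0 ↔ i ∉ C) := by
  intro C v hv i
  classical
  obtain ⟨hv01, hvt0, hvt1, hmax, hmin, havg⟩ := hv
  -- basic properties of C
  have hCmax : ∀ j, (G.label j = NodeLabel.max ∨ G.label j = NodeLabel.avg) →
      (∃ w ∈ C, G.Arc j w) → j ∈ C := by
    rintro j hj ⟨w, hwC, harc⟩ T hT
    exact hT.2.1 j hj ⟨w, hwC T hT, harc⟩
  have hCmin : ∀ j, G.label j = NodeLabel.min → (∀ w, G.Arc j w → w ∈ C) → j ∈ C := by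
    intro j hj h T hT
    exact hT.2.2 j hj (fun w hw => h w hw T hT)
  have hC1 : G.t1 ∈ C := fun T hT => hT.1
  -- the positive direction: C ⊆ {j | 0 < v j}
  have hpos : C ⊆ {j | 0 < v j} := by
    apply Set.sInter_subset_of_mem
    refine ⟨by simp only [Set.mem_setOf_eq, hvt1]; norm_num, ?_, ?_⟩
    · rintro j hj ⟨w, hw, hne, hsucc⟩
      have h1 : (0:ℝ) ≤ v (G.succ j).1 := (hv01 _).1
      have h2 : (0:ℝ) ≤ v (G.succ j).2 := (hv01 _).1
      rcases hj with hj | hj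
      · have := hmax j hj
        simp only [Set.mem_setOf_eq] at hw ⊢
        rcases hsucc with rfl | rfl
        · rw [this]; exact lt_max_of_lt_left hw
        · rw [this]; exact lt_max_of_lt_right hw
      · have := havg j hj
        simp only [Set.mem_setOf_eq] at hw ⊢
        rcases hsucc with rfl | rfl
        · rw [this]; linarith
        · rw [this]; linarith
    · intro j hj h
      have hne : G.label j ≠ NodeLabel.term := by simp [hj]
      have h1 : 0 < v (G.succ j).1 := h _ ⟨hne, Or.inl rfl⟩
      have h2 : 0 < v (G.succ j).2 := h _ ⟨hne, Or.inr rfl⟩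
      simp only [Set.mem_setOf_eq]
      rw [hmin j hj]
      exact lt_min h1 h2
  constructor
  · intro h0 hiC
    have := hpos hiC
    simp only [Set.mem_setOf_eq, h0] at this
    exact lt_irrefl 0 this
  · intro hiC
    by_contra hne
    have hipos : 0 < v i := lt_of_le_of_ne (hv01 i).1 (Ne.symm hne)
    -- the maximum value on the complement of C
    set F : Finset V := Finset.univ.filter (fun j => j ∉ C) with hF
    have hiF : i ∈ F := by simp [hF, hiC]
    have hFne : F.Nonempty := ⟨i, hiF⟩
    set m : ℝ := F.sup' hFne v with hm
    have hle : ∀ x, x ∉ C → v x ≤ m := by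
      intro x hx
      exact Finset.le_sup' v (by simp [hF, hx])
    have hmpos : 0 < m := lt_of_lt_of_le hipos (hle i hiC)
    -- successors of non-C max/avg nodes are not in C
    have hsucc_notC : ∀ x, x ∉ C → (G.label x = NodeLabel.max ∨ G.label x = NodeLabel.avg) →
        (G.succ x).1 ∉ C ∧ (G.succ x).2 ∉ C := by
      intro x hx hlab
      have hne' : G.label x ≠ NodeLabel.term := by rcases hlab with h | h <;> simp [h]
      constructor
      · intro h1; exact hx (hCmax x hlab ⟨_, h1, hne', Or.inl rfl⟩)
      · intro h2; exact hx (hCmax x hlab ⟨_, h2, hne', Or.inr rfl⟩)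
    -- avg nodes at the max value propagate to both successors
    have hAvg : ∀ x, x ∉ C → v x = m → G.label x = NodeLabel.avg →
        ((G.succ x).1 ∉ C ∧ v (G.succ x).1 = m) ∧ ((G.succ x).2 ∉ C ∧ v (G.succ x).2 = m) := by
      intro x hx hvx hlab
      obtain ⟨h1, h2⟩ := hsucc_notC x hx (Or.inr hlab)
      have b1 := hle _ h1
      have b2 := hle _ h2
      have := havg x hlab
      rw [hvx] at this
      exact ⟨⟨h1, by linarith⟩, ⟨h2, by linarith⟩⟩
    -- selection for max/min nodes at the max value
    have hSel : ∀ x, x ∉ C → v x = m → (G.label x = NodeLabel.max ∨ G.label x = NodeLabel.min) →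
        ∃ w, (w ∉ C ∧ v w = m) ∧ ((G.succ x).1 = w ∨ (G.succ x).2 = w) := by
      intro x hx hvx hlab
      rcases hlab with hlab | hlab
      · obtain ⟨h1, h2⟩ := hsucc_notC x hx (Or.inl hlab)
        have b1 := hle _ h1
        have b2 := hle _ h2
        have hx' := hmax x hlab
        rw [hvx] at hx'
        rcases max_choice (v (G.succ x).1) (v (G.succ x).2) with h | h
        · exact ⟨(G.succ x).1, ⟨h1, by rw [hx', h]⟩, Or.inl rfl⟩
        · exact ⟨(G.succ x).2, ⟨h2, by rw [hx', h]⟩, Or.inr rfl⟩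
      · have : ¬ ∀ w, G.Arc x w → w ∈ C := fun h => hx (hCmin x hlab h)
        push_neg at this
        obtain ⟨w, ⟨hne', hsw⟩, hwC⟩ := this
        have bw := hle _ hwC
        have hx' := hmin x hlab
        rw [hvx] at hx'
        have hwge : m ≤ v w := by
          rcases hsw with rfl | rfl
          · rw [hx']; exact min_le_left _ _
          · rw [hx']; exact min_le_right _ _
        exact ⟨w, ⟨hwC, le_antisymm bw hwge⟩, hsw⟩
    -- define a strategy following the max-value set
    set P : V → Prop := fun x => (x ∉ C ∧ v x = m) ∧
      (G.label x = NodeLabel.max ∨ G.label x = NodeLabel.min) with hP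
    set c : V → V := fun x => if h : P x then (hSel x h.1.1 h.1.2 h.2).choose
      else (G.succ x).1 with hc
    have hpair : G.IsStrategyPair c := by
      intro x hx
      by_cases h : P x
      · have := (hSel x h.1.1 h.1.2 h.2).choose_spec.2
        simp only [hc, dif_pos h]
        rcases this with h' | h'
        · exact Or.inl h'.symm
        · exact Or.inr h'.symm
      · exact Or.inl (dif_neg h)
    -- nodes reached from the max-value set stay in it
    have hstay : ∀ a b, G.StratArc c a b → (a ∉ C ∧ v a = m) → (b ∉ C ∧ v b = m) := by
      intro a b harc ha
      rcases harc with ⟨hlab, hs⟩ | ⟨hlab, hcb⟩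
      · have := hAvg a ha.1 ha.2 hlab
        rcases hs with rfl | rfl
        · exact this.1
        · exact this.2
      · have hPa : P a := ⟨ha, hlab⟩
        have hspec := (hSel a ha.1 ha.2 hlab).choose_spec.1
        have : c a = (hSel a ha.1 ha.2 hlab).choose := dif_pos hPa
        rw [← hcb, this]
        exact hspec
    -- pick the node achieving the maximum and follow the strategy
    obtain ⟨b0, hb0F, hb0⟩ := Finset.exists_mem_eq_sup' hFne v
    have hb0C : b0 ∉ C := by simpa [hF] using hb0F
    obtain ⟨t, htterm, hpath⟩ := hG c hpair b0
    have htS : t ∉ C ∧ v t = m := by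
      clear htterm
      induction hpath with
      | refl => exact ⟨hb0C, hb0.symm⟩
      | tail _ hstep ih => exact hstay _ _ hstep ih
    rcases (G.term_iff t).1 htterm with rfl | rfl
    · rw [hvt0] at htS
      exact absurd htS.2.symm (ne_of_gt hmpos)
    · exact htS.1 hC1
end

section
/- Let G be a Stopping Game in which no arc of G ends at terminal-1 (terminal-1 has in-degree zero). Then every stable assignment v of G satisfies v(i) = 0 for every node i other than terminal-1. -/
/-- In a Stopping Game in which no arc ends at terminal-1, every stable
assignment assigns the value `0` to every node other than terminal-1. -/
theorem stmt10 {V : Type} [Fintype V] (G : SSG V) (hG : G.Stopping)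
    (hin : ∀ u, ¬ G.Arc u G.t1) :
    ∀ v : V → ℝ, G.Stable v → ∀ i, i ≠ G.t1 → v i = 0 := by
  classical
  intro v hv i hi
  by_contra h0
  obtain ⟨hIcc, ht0, ht1, hmax, hmin, havg⟩ := hv
  have hvpos : 0 < v i := lt_of_le_of_ne (hIcc i).1 (Ne.symm h0)
  set T : Finset V := Finset.univ.filter (· ≠ G.t1) with hT
  have hiT : i ∈ T := by simp [hT, hi]
  have hTne : T.Nonempty := ⟨i, hiT⟩
  set M := T.sup' hTne v with hM
  have hle : ∀ j, j ≠ G.t1 → v j ≤ M := fun j hj => Finset.le_sup' v (by simp [hT, hj])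
  have hMpos : 0 < M := lt_of_lt_of_le hvpos (hle i hi)
  obtain ⟨j, hjT, hjM⟩ := Finset.exists_mem_eq_sup' hTne v
  have hjne : j ≠ G.t1 := by simpa [hT] using hjT
  have hsucc : ∀ u, G.label u ≠ NodeLabel.term →
      (G.succ u).1 ≠ G.t1 ∧ (G.succ u).2 ≠ G.t1 := by
    intro u hu
    constructor <;> intro h <;> exact hin u ⟨hu, by tauto⟩
  set c : V → V := fun u => if v (G.succ u).1 = v u then (G.succ u).1 else (G.succ u).2
    with hc
  have hstrat : G.IsStrategyPair c := by
    intro u _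
    by_cases h : v (G.succ u).1 = v u <;> simp [hc, h]
  obtain ⟨t, htterm, hpath⟩ := hG c hstrat j
  have key : ∀ a b, G.StratArc c a b → a ≠ G.t1 → v a = M → b ≠ G.t1 ∧ v b = M := by
    intro a b hab ha hva
    have haterm : G.label a ≠ NodeLabel.term := by
      rcases hab with ⟨h, _⟩ | ⟨h, _⟩
      · simp [h]
      · rcases h with h | h <;> simp [h]
    obtain ⟨h1, h2⟩ := hsucc a haterm
    have hv1 : v (G.succ a).1 ≤ M := hle _ h1
    have hv2 : v (G.succ a).2 ≤ M := hle _ h2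
    rcases hab with ⟨hlab, hor⟩ | ⟨hlab, hcb⟩
    · have heq := havg a hlab
      rw [hva] at heq
      have e1 : v (G.succ a).1 = M := by linarith
      have e2 : v (G.succ a).2 = M := by linarith
      rcases hor with h | h <;> subst h
      · exact ⟨h1, e1⟩
      · exact ⟨h2, e2⟩
    · subst hcb
      rcases hlab with hlab | hlab
      · have heq := hmax a hlab
        by_cases h : v (G.succ a).1 = v a
        · simp only [hc, if_pos h]
          exact ⟨h1, h.trans hva⟩
        · have : v (G.succ a).2 = v a := by
            rcases max_choice (v (G.succ a).1) (v (G.succ a).2) with hm | hm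
            · exact absurd (by rw [heq, hm]) h
            · rw [heq, hm]
          simp only [hc, if_neg h]
          exact ⟨h2, this.trans hva⟩
      · have heq := hmin a hlab
        have h : v (G.succ a).1 = v a := by
          have : v a ≤ v (G.succ a).1 := heq ▸ min_le_left _ _
          have : v (G.succ a).1 = M := le_antisymm hv1 (hva ▸ this)
          rw [this, hva]
        simp only [hc, if_pos h]
        exact ⟨h1, h.trans hva⟩
  have hinv : t ≠ G.t1 ∧ v t = M := by
    clear htterm
    induction hpath with
    | refl => exact ⟨hjne, hjM.symm⟩
    | tail _ hstep ih => exact key _ _ hstep ih.1 ih.2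
  have hne0 : t ≠ G.t0 := by
    intro h
    rw [h, ht0] at hinv
    exact absurd hinv.2.symm (ne_of_gt hMpos)
  rcases (G.term_iff t).mp htterm with h | h
  · exact hne0 h
  · exact hinv.1 h
end
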